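/- Let D be a digraph and S, T disjoint subsets of V(D). Let C be the closest minimum S-T separator (the unique minimum S-T separator covered by every minimum S-T separator) and let v be a vertex reachable from S in D − C. Then every S-(T ∪ {v}) separator has size strictly greater than λ_D(S,T), the size of a minimum S-T separator. -/

import Mathlib

variable {V : Type*}

/-- `u` reaches `v` in the digraph with arc relation `A` after deleting the vertex set `X`. -/
def Reaches (A : V → V → Prop) (X : Set V) (u v : V) : Prop :=
  u ∉ X ∧ Relation.ReflTransGen (fun a b => A a b ∧ b ∉ X) u v

/-- The set of vertices reachable from `S` after deleting `X`. -/
def ReachSet (A : V → V → Prop) (S X : Set V) : Set V :=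
  {v | ∃ s ∈ S, Reaches A X s v}

/-- The out-neighbourhood of `R`: vertices outside `R` with an in-neighbour in `R`. -/
def Nplus (A : V → V → Prop) (R : Set V) : Set V :=
  {v | v ∉ R ∧ ∃ u ∈ R, A u v}

/-- `C` is an `S`-`T` separator. -/
def IsSep (A : V → V → Prop) (S T C : Set V) : Prop :=
  C ∩ S = ∅ ∧ C ∩ T = ∅ ∧ ∀ s ∈ S, ∀ t ∈ T, ¬ Reaches A C s t

/-- `C` is a minimum `S`-`T` separator. -/
def IsMinSep (A : V → V → Prop) (S T C : Set V) : Prop :=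
  IsSep A S T C ∧ ∀ C', IsSep A S T C' → C.ncard ≤ C'.ncard

/-- `u` reaches `v` by a path all of whose vertices lie in `P`. -/
def ReachIn (A : V → V → Prop) (P : Set V) (u v : V) : Prop :=
  u ∈ P ∧ Relation.ReflTransGen (fun a b => A a b ∧ b ∈ P) u v

theorem IsSep.mono_right {A : V → V → Prop} {S T T' C : Set V} (h : IsSep A S T' C)
    (hT : T ⊆ T') : IsSep A S T C :=
  ⟨h.1, Set.subset_eq_empty (Set.inter_subset_inter_right C hT) h.2.1,
    fun s hs t ht => h.2.2 s hs t (hT ht)⟩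

theorem IsSep.notMem_reachSet {A : V → V → Prop} {S T C : Set V} (h : IsSep A S T C)
    {t : V} (ht : t ∈ T) : t ∉ ReachSet A S C :=
  fun ⟨s, hs, hst⟩ => h.2.2 s hs t ht hst

theorem IsMinSep.of_ncard_le {A : V → V → Prop} {S T C C' : Set V} (hC : IsMinSep A S T C)
    (hC' : IsSep A S T C') (hcard : C'.ncard ≤ C.ncard) : IsMinSep A S T C' :=
  ⟨hC', fun C'' hC'' => hcard.trans (hC.2 C'' hC'')⟩

theorem closest_sep_lambda_increase_general (A : V → V → Prop) (S T C : Set V)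
    (hmin : IsMinSep A S T C)
    (hclosest : ∀ C', IsMinSep A S T C' → ReachSet A S C ⊆ ReachSet A S C')
    (v : V) (hv : v ∈ ReachSet A S C) :
    ∀ C', IsSep A S (T ∪ {v}) C' → C.ncard < C'.ncard := by
  intro C' hC'
  have hC'T : IsSep A S T C' := hC'.mono_right Set.subset_union_left
  refine (hmin.2 C' hC'T).lt_of_not_ge fun hcard => ?_
  have hC'min : IsMinSep A S T C' := hmin.of_ncard_le hC'T hcard
  exact hC'.notMem_reachSet (Or.inr rfl) (hclosest C' hC'min hv)

/-- If `C` is the closest minimum `S`-`T` separator (covered by every minimum `S`-`T`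
separator) and `v` is reachable from `S` in `D − C`, then every `S`-`(T ∪ {v})`
separator is strictly larger than `λ_D(S,T) = |C|`. -/
theorem closest_sep_lambda_increase [Fintype V] (A : V → V → Prop) (S T C : Set V)
    (hST : Disjoint S T)
    (hmin : IsMinSep A S T C)
    (hclosest : ∀ C', IsMinSep A S T C' → ReachSet A S C ⊆ ReachSet A S C')
    (v : V) (hv : v ∈ ReachSet A S C) :
    ∀ C', IsSep A S (T ∪ {v}) C' → C.ncard < C'.ncard :=
  closest_sep_lambda_increase_general A S T C hmin hclosest v hv
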